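/- arXiv:1207.4650 — 2 statements merged into one kernel-verified Lean document; each statement's English description precedes it below -/
import Mathlib

section
/- Let G be a finitely generated group and let H be a subgroup of G of finite index. Then RG(G) = RG(H)/[G : H]. -/
/-- `dGen G` is the minimal number of generators of the group `G`. -/
noncomputable def dGen (G : Type*) [Group G] : ℕ :=
  sInf {n : ℕ | ∃ S : Finset G, S.card = n ∧ Subgroup.closure (S : Set G) = ⊤}

/-- The rank gradient of `G`. -/
noncomputable def rankGradient (G : Type*) [Group G] : ℝ :=
  sInf {r : ℝ | ∃ H : Subgroup G, H.index ≠ 0 ∧ r = ((dGen H : ℝ) - 1) / (H.index : ℝ)}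

open scoped commutatorElement in
/-- The subgroup `[G,G]G^p` of `G` (as a normal closure of its generators). -/
def pCommPow (p : ℕ) (G : Type*) [Group G] : Subgroup G :=
  Subgroup.normalClosure ({x | ∃ a b : G, x = ⁅a, b⁆} ∪ {x | ∃ g : G, x = g ^ p})

instance pCommPow_normal (p : ℕ) (G : Type*) [Group G] : (pCommPow p G).Normal :=
  Subgroup.normalClosure_normal

/-- `d_p(G) = d(G/([G,G]G^p))`. -/
noncomputable def dp (p : ℕ) (G : Type*) [Group G] : ℕ :=
  dGen (G ⧸ pCommPow p G)

/-- The `p`-gradient of `G`. -/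
noncomputable def pGradient (p : ℕ) (G : Type*) [Group G] : ℝ :=
  sInf {r : ℝ | ∃ H : Subgroup G, H.Normal ∧ (∃ k : ℕ, H.index = p ^ k) ∧
    r = ((dp p H : ℝ) - 1) / (H.index : ℝ)}

/-- The `p`-residual: intersection of all normal subgroups of `p`-power index. -/
def pResidual (p : ℕ) (G : Type*) [Group G] : Subgroup G :=
  ⨅ H ∈ {H : Subgroup G | H.Normal ∧ ∃ k : ℕ, H.index = p ^ k}, H

instance pResidual_normal (p : ℕ) (G : Type*) [Group G] : (pResidual p G).Normal := by
  constructor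
  intro n hn g
  simp only [pResidual, Subgroup.mem_iInf] at hn ⊢
  intro H hH
  exact hH.1.conj_mem n (hn H hH) g

/-!
Subgroups of finite index in `H` are subgroups of finite index in `G`, with the index multiplied
by `[G : H]`; this gives `RG(G) ≤ RG(H) / [G : H]`. Conversely, for `K ≤ G` of finite index,
`[H : K ∩ H] [G : H] = [K : K ∩ H] [G : K]`, and Schreier's index formula
`d(K ∩ H) - 1 ≤ [K : K ∩ H] (d(K) - 1)` bounds the term of `K ∩ H` in `RG(H) / [G : H]` by the
term `(d(K) - 1) / [G : K]` of `RG(G)`.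

Schreier's formula for `B ≤ A` of index `m`, with `A` generated by `S`: choose a spanning tree of
the Schreier graph on `A ⧸ B` rooted at the trivial coset, and let `t c` be the label of the tree
path to `c`. The `m |S|` Schreier generators `(t (s • c))⁻¹ s (t c)` generate `B`, and the `m - 1`
of them attached to tree edges are trivial. Since `A ⧸ B` is finite, inverses of generators act
as positive powers, so the tree can be built from edges `c ↦ s • c` with `s ∈ S` alone.
-/

open Subgroup

theorem Subgroup.exists_mem_submonoidClosure_mk_eq {A : Type*} [Group A] (B : Subgroup A)
    [B.FiniteIndex] {S : Set A} (hS : closure S = ⊤) (g : A) :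
    ∃ m ∈ Submonoid.closure S, (m : A ⧸ B) = g := by
  let φ := MulAction.toPermHom A (A ⧸ B)
  have hφg : φ g ∈ (Submonoid.closure S).map φ := by
    rw [MonoidHom.map_mclosure, ← closure_toSubmonoid_of_isOfFinOrder
      fun x _ => isOfFinOrder_of_finite x, ← MonoidHom.map_closure, hS]
    exact ⟨g, mem_top g, rfl⟩
  obtain ⟨m, hm, hφm⟩ := hφg
  refine ⟨m, hm, ?_⟩
  simpa [φ] using congr($hφm ((1 : A) : A ⧸ B))

namespace SchreierGraph

variable {A : Type*} [Group A] (B : Subgroup A) (S : Finset A)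

/-- The distance from the trivial coset to `c` along edges `c ↦ s • c` with `s ∈ S`. -/
noncomputable def dist (c : A ⧸ B) : ℕ :=
  sInf {n | ∃ l : List A, (∀ x ∈ l, x ∈ S) ∧ l.length = n ∧ (l.prod : A ⧸ B) = c}

variable {B S} [B.FiniteIndex]

theorem exists_step (hS : closure (S : Set A) = ⊤) {c : A ⧸ B} (hc : c ≠ ((1 : A) : A ⧸ B)) :
    ∃ p : A × (A ⧸ B), p.1 ∈ S ∧ p.1 • p.2 = c ∧ dist B S p.2 < dist B S c := by
  have hne : {n | ∃ l : List A, (∀ x ∈ l, x ∈ S) ∧ l.length = n ∧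
      (l.prod : A ⧸ B) = c}.Nonempty := by
    obtain ⟨g, rfl⟩ := QuotientGroup.mk_surjective c
    obtain ⟨m, hm, hmg⟩ := B.exists_mem_submonoidClosure_mk_eq hS g
    obtain ⟨l, hl, rfl⟩ := Submonoid.exists_list_of_mem_closure hm
    exact ⟨l.length, l, hl, rfl, hmg⟩
  obtain ⟨l, hl, hlen, hprod⟩ := Nat.sInf_mem hne
  match l, hl, hlen, hprod with
  | [], _, _, hprod => exact absurd hprod.symm hc
  | s :: t, hl, hlen, hprod =>
    refine ⟨(s, t.prod), hl s List.mem_cons_self, by simpa using hprod, ?_⟩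
    have ht : dist B S t.prod ≤ t.length :=
      Nat.sInf_le ⟨t, fun x hx => hl x (List.mem_cons_of_mem s hx), rfl, rfl⟩
    simp only [List.length_cons] at hlen
    exact ht.trans_lt (by rw [dist]; omega)

/-- The tree edge `(s, c')` with `s • c' = c` by which `c` is reached. -/
noncomputable def step (hS : closure (S : Set A) = ⊤) {c : A ⧸ B} (hc : c ≠ ((1 : A) : A ⧸ B)) :
    A × (A ⧸ B) :=
  Classical.choose (exists_step hS hc)

theorem step_spec (hS : closure (S : Set A) = ⊤) {c : A ⧸ B} (hc : c ≠ ((1 : A) : A ⧸ B)) :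
    (step hS hc).1 ∈ S ∧ (step hS hc).1 • (step hS hc).2 = c ∧
      dist B S (step hS hc).2 < dist B S c :=
  Classical.choose_spec (exists_step hS hc)

open Classical in
/-- The Schreier transversal. -/
noncomputable def transversal (hS : closure (S : Set A) = ⊤) (c : A ⧸ B) : A :=
  if hc : c = ((1 : A) : A ⧸ B) then 1 else (step hS hc).1 * transversal hS (step hS hc).2
termination_by dist B S c
decreasing_by exact (step_spec hS hc).2.2

theorem transversal_one (hS : closure (S : Set A) = ⊤) :
    transversal hS ((1 : A) : A ⧸ B) = 1 := by
  rw [transversal, dif_pos rfl]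

theorem transversal_of_ne_one (hS : closure (S : Set A) = ⊤) {c : A ⧸ B}
    (hc : c ≠ ((1 : A) : A ⧸ B)) :
    transversal hS c = (step hS hc).1 * transversal hS (step hS hc).2 := by
  rw [transversal, dif_neg hc]

theorem mk_transversal (hS : closure (S : Set A) = ⊤) (c : A ⧸ B) :
    ((transversal hS c : A) : A ⧸ B) = c := by
  fun_induction transversal hS c with
  | case1 => rfl
  | case2 c hc ih =>
    rw [← smul_eq_mul, ← MulAction.Quotient.smul_mk, ih, (step_spec hS hc).2.1]

noncomputable def generator (hS : closure (S : Set A) = ⊤) (c : A ⧸ B) (s : A) : A :=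
  (transversal hS (s • c))⁻¹ * s * transversal hS c

theorem generator_mem (hS : closure (S : Set A) = ⊤) (c : A ⧸ B) (s : A) :
    generator hS c s ∈ B := by
  have h : ((s * transversal hS c : A) : A ⧸ B) = transversal hS (s • c) := by
    rw [← smul_eq_mul, ← MulAction.Quotient.smul_mk, mk_transversal, mk_transversal]
  simpa [generator, mul_assoc] using QuotientGroup.eq.mp h.symm

theorem generator_step (hS : closure (S : Set A) = ⊤) {c : A ⧸ B}
    (hc : c ≠ ((1 : A) : A ⧸ B)) :
    generator hS (step hS hc).2 (step hS hc).1 = 1 := by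
  rw [generator, (step_spec hS hc).2.1, transversal_of_ne_one hS hc]
  group

theorem le_of_generator_mem (hS : closure (S : Set A) = ⊤) {K : Subgroup A}
    (hK : ∀ c : A ⧸ B, ∀ s ∈ S, generator hS c s ∈ K) : B ≤ K := by
  have hcocycle (g : A) (c : A ⧸ B) :
      (transversal hS (g • c))⁻¹ * g * transversal hS c ∈ K := by
    have hg : g ∈ closure (S : Set A) := hS ▸ mem_top g
    induction hg using closure_induction generalizing c with
    | mem s hs => exact hK c s hs
    | one => simp
    | mul x y _ _ hx hy =>
      convert mul_mem (hx (y • c)) (hy c) using 1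
      rw [mul_smul]
      group
    | inv x _ hx =>
      convert inv_mem (hx (x⁻¹ • c)) using 1
      rw [smul_inv_smul]
      group
  intro g hg
  have hg1 : g • ((1 : A) : A ⧸ B) = ((1 : A) : A ⧸ B) := by
    rw [MulAction.Quotient.smul_mk, smul_eq_mul, mul_one, QuotientGroup.eq]
    simpa using inv_mem hg
  simpa [hg1, transversal_one] using hcocycle g ((1 : A) : A ⧸ B)

noncomputable def treeEdge (hS : closure (S : Set A) = ⊤)
    (c : {c : A ⧸ B // c ≠ ((1 : A) : A ⧸ B)}) : (A ⧸ B) × A :=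
  ((step hS c.2).2, (step hS c.2).1)

theorem treeEdge_injective (hS : closure (S : Set A) = ⊤) :
    Function.Injective (treeEdge (B := B) hS) := by
  intro c d h
  apply Subtype.ext
  rw [← (step_spec hS c.2).2.1, ← (step_spec hS d.2).2.1]
  simp only [treeEdge, Prod.ext_iff] at h
  rw [h.1, h.2]

end SchreierGraph

namespace Subgroup

open SchreierGraph Finset

variable {A : Type*} [Group A]

theorem exists_finset_closure_eq_card_add_index_le (B : Subgroup A) [B.FiniteIndex]
    {S : Finset A} (hS : closure (S : Set A) = ⊤) :
    ∃ X : Finset A, closure (X : Set A) = B ∧ #X + B.index ≤ B.index * #S + 1 := by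
  classical
  let _ := B.fintypeQuotientOfFiniteIndex
  let edges : Finset ((A ⧸ B) × A) := univ ×ˢ S
  let tree : Finset ((A ⧸ B) × A) := univ.image (treeEdge hS)
  have htree : tree ⊆ edges := by
    intro p hp
    obtain ⟨c, -, rfl⟩ := mem_image.mp hp
    exact mem_product.mpr ⟨mem_univ _, (step_spec hS c.2).1⟩
  refine ⟨(edges \ tree).image fun p => generator hS p.1 p.2, le_antisymm ?_ ?_, ?_⟩
  · rw [closure_le, coe_image]
    rintro _ ⟨p, -, rfl⟩
    exact generator_mem hS p.1 p.2
  · refine le_of_generator_mem hS fun c s hs => ?_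
    by_cases hcs : (c, s) ∈ tree
    · obtain ⟨e, -, he⟩ := mem_image.mp hcs
      simp only [treeEdge, Prod.ext_iff] at he
      rw [← he.1, ← he.2, generator_step]
      exact one_mem _
    · exact subset_closure <| mem_image_of_mem _ <|
        mem_sdiff.mpr ⟨mem_product.mpr ⟨mem_univ c, hs⟩, hcs⟩
  · have hedges : #edges = B.index * #S := by
      rw [card_product, card_univ, index_eq_card, Nat.card_eq_fintype_card]
    have htree_card : #tree = B.index - 1 := by
      rw [card_image_of_injective _ (treeEdge_injective hS), card_univ,
        Fintype.card_subtype_compl, Fintype.card_subtype_eq, index_eq_card,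
        Nat.card_eq_fintype_card]
    have hX := (card_image_le (s := edges \ tree) (f := fun p => generator hS p.1 p.2)).trans
      (card_sdiff_of_subset htree).le
    have := card_le_card htree
    have := B.index_ne_zero_of_finite
    omega

theorem relIndex_mul_index_comm (H K : Subgroup A) :
    K.relIndex H * H.index = H.relIndex K * K.index := by
  rw [← inf_relIndex_right, relIndex_mul_index inf_le_right, ← inf_relIndex_right,
    relIndex_mul_index inf_le_right, inf_comm]

end Subgroup

section dGen

variable {G : Type*} [Group G]

theorem dGen_eq_rank [Group.FG G] : dGen G = Group.rank G := by
  obtain ⟨S, hcard, hS⟩ : dGen G ∈ {n | ∃ S : Finset G, S.card = n ∧ closure (S : Set G) = ⊤} :=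
    Nat.sInf_mem (Group.fg_iff'.mp ‹_›)
  exact le_antisymm (Nat.sInf_le (Group.rank_spec G)) (hcard ▸ Group.rank_le hS)

theorem closure_finsetMap_eq_top {H : Type*} [Group H] (e : G ≃* H) {S : Finset G}
    (hS : closure (S : Set G) = ⊤) : closure (S.map e.toEmbedding : Set H) = ⊤ := by
  rw [Finset.coe_map]
  change closure ((e : G →* H) '' S) = ⊤
  rw [← MonoidHom.map_closure, hS, map_top_of_surjective _ e.surjective]

theorem dGen_congr {H : Type*} [Group H] (e : G ≃* H) : dGen G = dGen H := by
  unfold dGen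
  congr 1
  ext n
  constructor
  · rintro ⟨S, rfl, hS⟩
    exact ⟨S.map e.toEmbedding, Finset.card_map _, closure_finsetMap_eq_top e hS⟩
  · rintro ⟨S, rfl, hS⟩
    exact ⟨S.map e.symm.toEmbedding, Finset.card_map _, closure_finsetMap_eq_top e.symm hS⟩

theorem dGen_le_card_of_closure_eq {B : Subgroup G} {X : Finset G}
    (hX : closure (X : Set G) = B) : dGen B ≤ X.card := by
  subst hX
  rw [dGen_eq_rank]
  exact rank_closure_finset_le_card X

/-- **Schreier's index formula** `d(B) - 1 ≤ [G : B] (d(G) - 1)`, without truncated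
subtraction. -/
theorem dGen_add_index_le [Group.FG G] (B : Subgroup G) [B.FiniteIndex] :
    dGen B + B.index ≤ B.index * dGen G + 1 := by
  obtain ⟨S, hcard, hS⟩ := Group.rank_spec G
  obtain ⟨X, hX, hXcard⟩ := B.exists_finset_closure_eq_card_add_index_le hS
  have := dGen_le_card_of_closure_eq hX
  rw [dGen_eq_rank (G := G), ← hcard]
  omega

theorem dGen_subgroupOf_comm (H K : Subgroup G) :
    dGen (H.subgroupOf K) = dGen (K.subgroupOf H) := by
  rw [← inf_subgroupOf_right H K, ← inf_subgroupOf_right K H,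
    dGen_congr (subgroupOfEquivOfLe inf_le_right), dGen_congr (subgroupOfEquivOfLe inf_le_right),
    inf_comm]

end dGen

section rankGradient

variable {G : Type*} [Group G]

theorem rankGradient_le (K : Subgroup G) (hK : K.index ≠ 0) :
    rankGradient G ≤ ((dGen K : ℝ) - 1) / K.index := by
  refine csInf_le ⟨-1, ?_⟩ ⟨K, hK, rfl⟩
  rintro _ ⟨L, hL, rfl⟩
  have hL1 : (1 : ℝ) ≤ L.index := by exact_mod_cast Nat.one_le_iff_ne_zero.mpr hL
  rw [le_div_iff₀ (by linarith)]
  linarith [(dGen L).cast_nonneg (α := ℝ)]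

theorem le_rankGradient {r : ℝ}
    (h : ∀ K : Subgroup G, K.index ≠ 0 → r ≤ ((dGen K : ℝ) - 1) / K.index) :
    r ≤ rankGradient G :=
  le_csInf ⟨_, ⊤, by simp, rfl⟩ fun _ ⟨K, hK, hr⟩ => hr ▸ h K hK

theorem rankGradient_le_div_index (H : Subgroup G) (hH : H.index ≠ 0) :
    rankGradient G ≤ rankGradient H / H.index := by
  have hpos : (0 : ℝ) < H.index := by positivity
  rw [le_div_iff₀ hpos]
  refine le_rankGradient fun K hK => ?_
  have := rankGradient_le (K.map H.subtype) (by rw [index_map_subtype]; exact mul_ne_zero hK hH)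
  rwa [index_map_subtype, ← dGen_congr (K.equivMapOfInjective _ H.subtype_injective),
    Nat.cast_mul, ← div_div, le_div_iff₀ hpos] at this

theorem div_index_le_rankGradient [Group.FG G] (H : Subgroup G) (hH : H.index ≠ 0) :
    rankGradient H / H.index ≤ rankGradient G := by
  refine le_rankGradient fun K hK => ?_
  have : H.FiniteIndex := ⟨hH⟩
  have : K.FiniteIndex := ⟨hK⟩
  have hidx : ((K.subgroupOf H).index : ℝ) * H.index = (H.subgroupOf K).index * K.index := by
    exact_mod_cast relIndex_mul_index_comm H K
  have hSchreier :
      (dGen (H.subgroupOf K) : ℝ) - 1 ≤ (H.subgroupOf K).index * ((dGen K : ℝ) - 1) := by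
    have h := (Nat.cast_le (α := ℝ)).mpr (dGen_add_index_le (H.subgroupOf K))
    push_cast at h
    linarith
  have hpos : (0 : ℝ) < (H.subgroupOf K).index :=
    Nat.cast_pos.mpr (Nat.pos_of_ne_zero FiniteIndex.index_ne_zero)
  calc rankGradient H / H.index
      ≤ ((dGen (K.subgroupOf H) : ℝ) - 1) / (K.subgroupOf H).index / H.index := by
        gcongr
        exact rankGradient_le _ FiniteIndex.index_ne_zero
    _ = ((dGen (H.subgroupOf K) : ℝ) - 1) / (H.subgroupOf K).index / K.index := by
        rw [div_div, div_div, hidx, dGen_subgroupOf_comm]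
    _ ≤ ((dGen K : ℝ) - 1) / K.index := by
        gcongr
        rwa [div_le_iff₀' hpos]

end rankGradient

/-- For a finitely generated group `G` and a finite-index subgroup `H`,
`RG(G) = RG(H) / [G : H]`. -/
theorem rankGradient_of_finiteIndex (G : Type*) [Group G] [Group.FG G]
    (H : Subgroup G) (hH : H.index ≠ 0) :
    rankGradient G = rankGradient H / (H.index : ℝ) :=
  le_antisymm (rankGradient_le_div_index H hH) (div_index_le_rankGradient H hH)
end

section
/- Fix a prime p and let G be a p-torsion group, i.e., every element of G has order a power of p. Then every finite-index subgroup H ≤ G is subnormal in G of index a power of p: there is a finite chain H = H_0 ⊴ H_1 ⊴ ... ⊴ H_n = G with each term normal in the next, and [G : H] is a power of p. -/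
/-- `H` is subnormal in `G`: there is a finite chain from `H` to `G`,
each term normal in the next. -/
def IsSubnormal {G : Type*} [Group G] (H : Subgroup G) : Prop :=
  ∃ (n : ℕ) (c : ℕ → Subgroup G), c 0 = H ∧ c n = ⊤ ∧
    ∀ i < n, c i ≤ c (i + 1) ∧ ((c i).subgroupOf (c (i + 1))).Normal

/-!
Since `H` has finite index, so does its normal core `N`, and `G ⧸ N` is a finite `p`-group. Finite
`p`-groups are nilpotent, hence satisfy the normalizer condition, so climbing through normalizers
shows that every subgroup of `G ⧸ N` is subnormal. Pulling back along `G → G ⧸ N` makes `H`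
subnormal in `G`; the index of `H` divides `|G ⧸ N|`, a power of `p`.
-/

theorem isSubnormal_of_subgroup_isSubnormal {G : Type*} [Group G] {H : Subgroup G}
    (hH : H.IsSubnormal) : IsSubnormal H := by
  obtain ⟨n, c, hmono, hnormal, hc0, hcn⟩ := Subgroup.IsSubnormal.isSubnormal_iff.mp hH
  exact ⟨n, c, hc0, hcn, fun i _ => ⟨hmono i.le_succ, hnormal i⟩⟩

theorem NormalizerCondition.isSubnormal {Q : Type*} [Group Q] [WellFoundedGT (Subgroup Q)]
    (hnc : NormalizerCondition Q) (K : Subgroup Q) : K.IsSubnormal := by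
  induction K using WellFoundedGT.induction with
  | _ K ih =>
    rcases eq_or_ne K ⊤ with rfl | hK
    · exact .top
    · have hlt : K < Subgroup.normalizer (K : Set Q) := hnc K hK.lt_top
      exact .step K _ hlt.le (ih _ hlt) Subgroup.normal_in_normalizer

theorem IsPGroup.isSubnormal_of_finiteIndex {p : ℕ} [Fact p.Prime] {G : Type*} [Group G]
    (hG : IsPGroup p G) (H : Subgroup G) [H.FiniteIndex] : H.IsSubnormal := by
  let N := H.normalCore
  have : Finite (G ⧸ N) := Subgroup.finite_quotient_of_finiteIndex
  have : Group.IsNilpotent (G ⧸ N) := (hG.to_quotient N).isNilpotent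
  have hsub := Group.normalizerCondition_of_isNilpotent.isSubnormal (H.map (QuotientGroup.mk' N))
  rw [← Subgroup.comap_map_eq_self (f := QuotientGroup.mk' N)
    ((QuotientGroup.ker_mk' N).trans_le H.normalCore_le)]
  exact hsub.comap _

/-- in a `p`-torsion group every finite-index subgroup is subnormal of
`p`-power index. -/
theorem subnormal_of_finiteIndex_of_pTorsion (p : ℕ) (hp : p.Prime)
    (G : Type*) [Group G] (htor : ∀ g : G, ∃ k : ℕ, orderOf g = p ^ k)
    (H : Subgroup G) (hH : H.index ≠ 0) :
    IsSubnormal H ∧ ∃ k : ℕ, H.index = p ^ k := by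
  have : Fact p.Prime := ⟨hp⟩
  have : H.FiniteIndex := ⟨hH⟩
  have hG : IsPGroup p G := isPGroup_iff_orderOf_dvd_pow.mpr fun g => (htor g).imp fun _ h => h.dvd
  exact ⟨isSubnormal_of_subgroup_isSubnormal (hG.isSubnormal_of_finiteIndex H), hG.index H⟩
end
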